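/- arXiv:1811.12527 — 8 statements merged into one kernel-verified Lean document; each statement's English description precedes it below -/
import Mathlib

section
/- Suppose that for every u ∈ U and every v ∈ V there exists a coordinate c with u[c] = v[c] = w[c] = 1. Then the diameter-construction graph G(U,V,w,a) has diameter at most 4a+1; that is, for every pair of vertices y, z of G(U,V,w,a) there is a walk between y and z of length at most 4a+1. -/
/-!
Diameter lower-bound construction (Theorem 3.1, "yes" case): if every `u ∈ U` and
`v ∈ V` share a coordinate `c` with `u[c] = v[c] = w[c] = 1`, then the
diameter-construction graph `G(U,V,w,a)` has diameter at most `4a+1`: every pair of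
vertices is joined by a walk of length at most `4a+1`.
-/

namespace DiamConstr

variable {B P : Type*}

/-- Vertices of a graph assembled from base vertices `B` and, for each path request
`p : P` of length `L p`, the `L p - 1` internal vertices of the path. -/
abbrev Vert (B P : Type*) (L : P → ℕ) : Type _ := B ⊕ (Σ p : P, Fin (L p - 1))

/-- `pos e0 e1 L p i z` : `z` is the `i`-th vertex along the path `p`
(whose endpoints are `e0 p` and `e1 p` and whose length is `L p`). -/
def pos (e0 e1 : P → B) (L : P → ℕ) (p : P) (i : ℕ) (z : Vert B P L) : Prop :=
  (i = 0 ∧ z = Sum.inl (e0 p)) ∨ (i = L p ∧ z = Sum.inl (e1 p)) ∨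
    (∃ h : i - 1 < L p - 1, 0 < i ∧ i < L p ∧ z = Sum.inr ⟨p, ⟨i - 1, h⟩⟩)

/-- The graph obtained from the base vertex set `B` by adding, for each `p : P`, an
internally vertex-disjoint path of length `L p` between the vertices `e0 p` and
`e1 p` (for `L p = 1` this is just an edge). -/
def pathGraph (e0 e1 : P → B) (L : P → ℕ) : SimpleGraph (Vert B P L) where
  Adj x y := x ≠ y ∧ ∃ p i, i < L p ∧
    ((pos e0 e1 L p i x ∧ pos e0 e1 L p (i + 1) y) ∨
     (pos e0 e1 L p i y ∧ pos e0 e1 L p (i + 1) x))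
  symm := by
    constructor
    rintro x y ⟨hne, p, i, hi, h⟩
    exact ⟨hne.symm, p, i, hi, h.symm⟩
  loopless := ⟨fun x h => h.1 rfl⟩

/-- Base (named) vertices of the diameter-construction graph `G(U,V,w,a)`:
coordinate vertices `c_U`, `c_V`, path endpoints `u^0`, `u^a`, `v^0`, `v^a`,
and the two extra vertices `x` and `y`. -/
inductive Base (ℓ : ℕ) (U V : Set (Fin ℓ → Bool)) : Type
  | cU (c : Fin ℓ)
  | cV (c : Fin ℓ)
  | u0 (u : U)
  | ua (u : U)
  | v0 (v : V)
  | va (v : V)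
  | x
  | y

/-- Path requests of the diameter-construction graph `G(U,V,w,a)`. -/
inductive Pth (ℓ : ℕ) (U V : Set (Fin ℓ → Bool)) (w : Fin ℓ → Bool) : Type
  | upath (u : U)                                      -- u^0 … u^a, length a
  | vpath (v : V)                                      -- v^0 … v^a, length a
  | uc (u : U) (c : Fin ℓ) (h : u.1 c = true)          -- u^a — c_U, length a
  | vc (v : V) (c : Fin ℓ) (h : v.1 c = true)          -- c_V — v^0, length a
  | wc (c : Fin ℓ) (h : w c = true)                    -- edge c_U — c_V
  | xu (u : U)                                         -- x — u^a, length a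
  | yv (v : V)                                         -- y — v^0, length a

variable {ℓ : ℕ} {U V : Set (Fin ℓ → Bool)} {w : Fin ℓ → Bool}

/-- First endpoint of each path request. -/
def e0 : Pth ℓ U V w → Base ℓ U V
  | .upath u => .u0 u
  | .vpath v => .v0 v
  | .uc u _ _ => .ua u
  | .vc _ c _ => .cV c
  | .wc c _ => .cU c
  | .xu _ => .x
  | .yv _ => .y

/-- Second endpoint of each path request. -/
def e1 : Pth ℓ U V w → Base ℓ U V
  | .upath u => .ua u
  | .vpath v => .va v
  | .uc _ c _ => .cU c
  | .vc v _ _ => .v0 v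
  | .wc c _ => .cV c
  | .xu u => .ua u
  | .yv v => .v0 v

/-- Length of each path request: the `c_U — c_V` connections are single edges,
all other paths have length `a`. -/
def len (a : ℕ) : Pth ℓ U V w → ℕ
  | .wc _ _ => 1
  | _ => a

/-- The diameter-construction graph `G(U,V,w,a)`. -/
def G (a ℓ : ℕ) (U V : Set (Fin ℓ → Bool)) (w : Fin ℓ → Bool) :
    SimpleGraph (Vert (Base ℓ U V) (Pth ℓ U V w) (len a)) :=
  pathGraph e0 e1 (len a)

end DiamConstr

/-!
Call the vertices `u^a` and `v^0` hubs. Every vertex is within distance `a` of a hub: each added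
path of length `a` has a hub as an endpoint, and by the covering hypotheses every `c_U` and every
`c_V` is the other endpoint of such a path. Two hubs are within distance `2a + 1`: two `u^a` meet
through `x`, two `v^0` through `y`, and `u^a`, `v^0` are joined through the edge `c_U — c_V` for a
coordinate `c` with `u[c] = v[c] = w[c] = 1`. Hence the diameter is at most `a + (2a + 1) + a`.
-/

lemma SimpleGraph.exists_walk_length_le_of_edist_le {V : Type*} {G : SimpleGraph V} {u v : V}
    {n : ℕ} (h : G.edist u v ≤ n) : ∃ p : G.Walk u v, p.length ≤ n := by
  obtain ⟨p, hp⟩ :=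
    SimpleGraph.exists_walk_of_edist_ne_top (h.trans_lt (ENat.natCast_lt_top n)).ne
  exact ⟨p, by exact_mod_cast hp ▸ h⟩

namespace DiamConstr

open SimpleGraph

section PathGraph

variable {B P : Type*} (e0 e1 : P → B) (L : P → ℕ)

def pathVertex (p : P) (i : ℕ) : Vert B P L :=
  if i = 0 then .inl (e0 p)
  else if h : i - 1 < L p - 1 then .inr ⟨p, ⟨i - 1, h⟩⟩
  else .inl (e1 p)

lemma pathVertex_zero (p : P) : pathVertex e0 e1 L p 0 = .inl (e0 p) := rfl

lemma pathVertex_length {p : P} (hp : 0 < L p) : pathVertex e0 e1 L p (L p) = .inl (e1 p) := by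
  rw [pathVertex, if_neg hp.ne', dif_neg (by omega)]

lemma inr_eq_pathVertex {p : P} (k : Fin (L p - 1)) :
    (.inr ⟨p, k⟩ : Vert B P L) = pathVertex e0 e1 L p (k + 1) := by
  rw [pathVertex, if_neg k.val.succ_ne_zero, dif_pos (by omega)]
  rfl

lemma pos_pathVertex {p : P} {i : ℕ} (hi : i ≤ L p) :
    pos e0 e1 L p i (pathVertex e0 e1 L p i) := by
  unfold pathVertex pos
  split_ifs with h0 h
  · exact .inl ⟨h0, rfl⟩
  · exact .inr (.inr ⟨h, by omega, by omega, rfl⟩)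
  · exact .inr (.inl ⟨by omega, rfl⟩)

lemma edist_pathVertex_succ_le_one {p : P} {i : ℕ} (hi : i < L p) :
    (pathGraph e0 e1 L).edist (pathVertex e0 e1 L p i) (pathVertex e0 e1 L p (i + 1)) ≤ 1 :=
  -- the two vertices coincide only for a path of length `1` from a base vertex to itself
  edist_le_one_iff_adj_or_eq.mpr <| or_iff_not_imp_right.mpr fun hne =>
    ⟨hne, p, i, hi, .inl ⟨pos_pathVertex e0 e1 L hi.le, pos_pathVertex e0 e1 L hi⟩⟩

lemma edist_pathVertex_le {p : P} {i j : ℕ} (hij : i ≤ j) (hj : j ≤ L p) :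
    (pathGraph e0 e1 L).edist (pathVertex e0 e1 L p i) (pathVertex e0 e1 L p j) ≤
      (j - i : ℕ) := by
  induction j, hij using Nat.le_induction with
  | base => simp
  | succ j hij ih =>
    calc _ ≤ _ + _ := SimpleGraph.edist_triangle
      _ ≤ ((j - i : ℕ) : ℕ∞) + 1 :=
        add_le_add (ih (by omega)) (edist_pathVertex_succ_le_one e0 e1 L (p := p) (by omega))
      _ = (j + 1 - i : ℕ) := by rw [Nat.sub_add_comm hij, Nat.cast_add, Nat.cast_one]

lemma pathGraph_edist_endpoints_le {p : P} (hp : 0 < L p) :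
    (pathGraph e0 e1 L).edist (.inl (e0 p)) (.inl (e1 p)) ≤ L p := by
  simpa [pathVertex_zero, pathVertex_length e0 e1 L hp] using
    edist_pathVertex_le e0 e1 L (p := p) (Nat.zero_le _) le_rfl

lemma pathGraph_edist_inr_left_le {p : P} (k : Fin (L p - 1)) :
    (pathGraph e0 e1 L).edist (.inr ⟨p, k⟩) (.inl (e0 p)) ≤ L p := by
  have := k.isLt
  rw [inr_eq_pathVertex e0 e1, edist_comm, ← pathVertex_zero e0 e1 L]
  exact (edist_pathVertex_le e0 e1 L (Nat.zero_le _) (by omega)).trans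
    (Nat.cast_le.mpr (by omega))

lemma pathGraph_edist_inr_right_le {p : P} (k : Fin (L p - 1)) :
    (pathGraph e0 e1 L).edist (.inr ⟨p, k⟩) (.inl (e1 p)) ≤ L p := by
  have := k.isLt
  rw [inr_eq_pathVertex e0 e1, ← pathVertex_length e0 e1 L (by omega)]
  exact (edist_pathVertex_le e0 e1 L (by omega) le_rfl).trans (Nat.cast_le.mpr (by omega))

end PathGraph

section Construction

variable {a ℓ : ℕ} {U V : Set (Fin ℓ → Bool)} {w : Fin ℓ → Bool}

lemma len_pos (ha : 0 < a) (p : Pth ℓ U V w) : 0 < len a p := by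
  cases p <;> simp [len, ha]

lemma edist_e0_e1_le (ha : 0 < a) (p : Pth ℓ U V w) :
    (G a ℓ U V w).edist (.inl (e0 p)) (.inl (e1 p)) ≤ len a p :=
  pathGraph_edist_endpoints_le e0 e1 (len a) (len_pos ha p)

def hubs : Set (Vert (Base ℓ U V) (Pth ℓ U V w) (len a)) :=
  Set.range (fun u : U => .inl (.ua u)) ∪ Set.range (fun v : V => .inl (.v0 v))

lemma exists_mem_hubs_edist_le (ha : 0 < a) (hU : U.Nonempty) (hV : V.Nonempty)
    (hUcov : ∀ c, ∃ u ∈ U, u c = true) (hVcov : ∀ c, ∃ v ∈ V, v c = true)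
    (z : Vert (Base ℓ U V) (Pth ℓ U V w) (len a)) :
    ∃ h ∈ hubs, (G a ℓ U V w).edist z h ≤ a := by
  rcases z with (c | c | u | u | v | v | _ | _) | ⟨p, k⟩
  · obtain ⟨u, hu, huc⟩ := hUcov c
    exact ⟨_, .inl ⟨⟨u, hu⟩, rfl⟩,
      edist_comm.trans_le (edist_e0_e1_le ha (.uc ⟨u, hu⟩ c huc))⟩
  · obtain ⟨v, hv, hvc⟩ := hVcov c
    exact ⟨_, .inr ⟨⟨v, hv⟩, rfl⟩, edist_e0_e1_le ha (.vc ⟨v, hv⟩ c hvc)⟩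
  · exact ⟨_, .inl ⟨u, rfl⟩, edist_e0_e1_le ha (.upath u)⟩
  · exact ⟨_, .inl ⟨u, rfl⟩, by simp⟩
  · exact ⟨_, .inr ⟨v, rfl⟩, by simp⟩
  · exact ⟨_, .inr ⟨v, rfl⟩, edist_comm.trans_le (edist_e0_e1_le ha (.vpath v))⟩
  · obtain ⟨u, hu⟩ := hU
    exact ⟨_, .inl ⟨⟨u, hu⟩, rfl⟩, edist_e0_e1_le ha (.xu ⟨u, hu⟩)⟩
  · obtain ⟨v, hv⟩ := hV
    exact ⟨_, .inr ⟨⟨v, hv⟩, rfl⟩, edist_e0_e1_le ha (.yv ⟨v, hv⟩)⟩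
  · cases p with
    | upath u => exact ⟨_, .inl ⟨u, rfl⟩, pathGraph_edist_inr_right_le e0 e1 (len a) k⟩
    | vpath v => exact ⟨_, .inr ⟨v, rfl⟩, pathGraph_edist_inr_left_le e0 e1 (len a) k⟩
    | uc u c _ => exact ⟨_, .inl ⟨u, rfl⟩, pathGraph_edist_inr_left_le e0 e1 (len a) k⟩
    | vc v c _ => exact ⟨_, .inr ⟨v, rfl⟩, pathGraph_edist_inr_right_le e0 e1 (len a) k⟩
    | wc c _ => exact k.elim0
    | xu u => exact ⟨_, .inl ⟨u, rfl⟩, pathGraph_edist_inr_right_le e0 e1 (len a) k⟩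
    | yv v => exact ⟨_, .inr ⟨v, rfl⟩, pathGraph_edist_inr_right_le e0 e1 (len a) k⟩

lemma edist_ua_ua_le (ha : 0 < a) (u u' : U) :
    (G a ℓ U V w).edist (.inl (.ua u)) (.inl (.ua u')) ≤ 2 * a :=
  calc _ ≤ (G a ℓ U V w).edist (.inl (.ua u)) (.inl .x) +
        (G a ℓ U V w).edist (.inl .x) (.inl (.ua u')) := SimpleGraph.edist_triangle
    _ ≤ a + a := add_le_add (edist_comm.trans_le (edist_e0_e1_le ha (.xu u)))
        (edist_e0_e1_le ha (.xu u'))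
    _ = 2 * a := (two_mul _).symm

lemma edist_v0_v0_le (ha : 0 < a) (v v' : V) :
    (G a ℓ U V w).edist (.inl (.v0 v)) (.inl (.v0 v')) ≤ 2 * a :=
  calc _ ≤ (G a ℓ U V w).edist (.inl (.v0 v)) (.inl .y) +
        (G a ℓ U V w).edist (.inl .y) (.inl (.v0 v')) := SimpleGraph.edist_triangle
    _ ≤ a + a := add_le_add (edist_comm.trans_le (edist_e0_e1_le ha (.yv v)))
        (edist_e0_e1_le ha (.yv v'))
    _ = 2 * a := (two_mul _).symm

lemma edist_ua_v0_le (ha : 0 < a)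
    (hyes : ∀ u ∈ U, ∀ v ∈ V, ∃ c, u c = true ∧ v c = true ∧ w c = true)
    (u : U) (v : V) :
    (G a ℓ U V w).edist (.inl (.ua u)) (.inl (.v0 v)) ≤ 2 * a + 1 := by
  obtain ⟨c, huc, hvc, hwc⟩ := hyes u u.2 v v.2
  calc _ ≤ (G a ℓ U V w).edist (.inl (.ua u)) (.inl (.cU c)) +
        ((G a ℓ U V w).edist (.inl (.cU c)) (.inl (.cV c)) +
          (G a ℓ U V w).edist (.inl (.cV c)) (.inl (.v0 v))) :=
        SimpleGraph.edist_triangle.trans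
          (add_le_add_right SimpleGraph.edist_triangle _)
    _ ≤ a + (1 + a) := add_le_add (edist_e0_e1_le ha (.uc u c huc))
        (add_le_add (edist_e0_e1_le ha (.wc c hwc)) (edist_e0_e1_le ha (.vc v c hvc)))
    _ = 2 * a + 1 := by ring

lemma edist_le_of_mem_hubs (ha : 0 < a)
    (hyes : ∀ u ∈ U, ∀ v ∈ V, ∃ c, u c = true ∧ v c = true ∧ w c = true)
    {h h' : Vert (Base ℓ U V) (Pth ℓ U V w) (len a)} (hh : h ∈ hubs) (hh' : h' ∈ hubs) :
    (G a ℓ U V w).edist h h' ≤ 2 * a + 1 := by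
  rcases hh with ⟨u, rfl⟩ | ⟨v, rfl⟩ <;> rcases hh' with ⟨u', rfl⟩ | ⟨v', rfl⟩
  · exact (edist_ua_ua_le ha u u').trans le_self_add
  · exact edist_ua_v0_le ha hyes u v'
  · exact edist_comm.trans_le (edist_ua_v0_le ha hyes u' v)
  · exact (edist_v0_v0_le ha v v').trans le_self_add

end Construction

end DiamConstr

open DiamConstr in
theorem diameter_construction_yes_case_general
    (a ℓ : ℕ) (ha : 0 < a)
    (U V : Set (Fin ℓ → Bool))
    (hU : U.Nonempty) (hV : V.Nonempty) (w : Fin ℓ → Bool)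
    (hUcov : ∀ c : Fin ℓ, ∃ u ∈ U, u c = true)
    (hVcov : ∀ c : Fin ℓ, ∃ v ∈ V, v c = true)
    (hyes : ∀ u ∈ U, ∀ v ∈ V, ∃ c, u c = true ∧ v c = true ∧ w c = true) :
    ∀ y z : Vert (Base ℓ U V) (Pth ℓ U V w) (len a),
      ∃ p : (G a ℓ U V w).Walk y z, p.length ≤ 4 * a + 1 := by
  intro y z
  obtain ⟨h, hh, hyh⟩ := exists_mem_hubs_edist_le ha hU hV hUcov hVcov y
  obtain ⟨h', hh', hzh'⟩ := exists_mem_hubs_edist_le ha hU hV hUcov hVcov z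
  apply SimpleGraph.exists_walk_length_le_of_edist_le
  calc (G a ℓ U V w).edist y z
      ≤ (G a ℓ U V w).edist y h + (G a ℓ U V w).edist h h' + (G a ℓ U V w).edist h' z :=
        SimpleGraph.edist_triangle.trans (add_le_add_left SimpleGraph.edist_triangle _)
    _ ≤ a + (2 * a + 1) + a :=
        add_le_add (add_le_add hyh (edist_le_of_mem_hubs ha hyes hh hh'))
          (SimpleGraph.edist_comm.trans_le hzh')
    _ = (4 * a + 1 : ℕ) := by push_cast; ring

open DiamConstr in
theorem diameter_construction_yes_case
    (a ℓ : ℕ) (ha : 0 < a) (hℓ : 0 < ℓ)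
    (U V : Set (Fin ℓ → Bool)) (hUfin : U.Finite) (hVfin : V.Finite)
    (hU : U.Nonempty) (hV : V.Nonempty) (w : Fin ℓ → Bool)
    (hUone : ∀ u ∈ U, ∃ c, u c = true) (hVone : ∀ v ∈ V, ∃ c, v c = true)
    (hUcov : ∀ c : Fin ℓ, ∃ u ∈ U, u c = true)
    (hVcov : ∀ c : Fin ℓ, ∃ v ∈ V, v c = true)
    (hyes : ∀ u ∈ U, ∀ v ∈ V, ∃ c, u c = true ∧ v c = true ∧ w c = true) :
    ∀ y z : Vert (Base ℓ U V) (Pth ℓ U V w) (len a),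
      ∃ p : (G a ℓ U V w).Walk y z, p.length ≤ 4 * a + 1 :=
  diameter_construction_yes_case_general a ℓ ha U V hU hV w hUcov hVcov hyes
end

section
/- Suppose that for every u ∈ U there exists v ∈ V such that no coordinate c satisfies u[c] = v[c] = w[c] = 1. Then the radius of the radius-construction graph G_rad is at least 6a+1; that is, for every vertex z of G_rad there exists a vertex t such that every walk between z and t has length at least 6a+1. -/
/-!
Lower bounds on distances are certified by potentials: if `f` drops by at most `1` along every
edge and `f t = 0`, every walk from `z` to `t` has length at least `f z`. On `G_rad` it suffices
to prescribe `f` on the named vertices, changing by at most the length of each added path, and to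
interpolate along the paths.
A vertex off the paths `u^0 … u^a`, `u^a — c_U` and `x — u^a` is at distance at least `6a+1` from
`y` in the opposite copy. A vertex on these paths for `u` is at distance at least `6a+1` from
`v^a` in the opposite copy, where `v` is a vector that `u` misses: a short route would have to
use `u^a — c_U — c_V — v^0` with `u[c] = v[c] = w[c] = 1`, and every detour through `x`, `y` or
the other copy costs at least `2a` more.
-/

namespace RadConstr

variable {B P : Type*}

/-- Vertices of a graph assembled from base vertices `B` and, for each path request
`p : P` of length `L p`, the `L p - 1` internal vertices of the path. -/
abbrev Vert (B P : Type*) (L : P → ℕ) : Type _ := B ⊕ (Σ p : P, Fin (L p - 1))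

/-- `pos e0 e1 L p i z` : `z` is the `i`-th vertex along the path `p`
(whose endpoints are `e0 p` and `e1 p` and whose length is `L p`). -/
def pos (e0 e1 : P → B) (L : P → ℕ) (p : P) (i : ℕ) (z : Vert B P L) : Prop :=
  (i = 0 ∧ z = Sum.inl (e0 p)) ∨ (i = L p ∧ z = Sum.inl (e1 p)) ∨
    (∃ h : i - 1 < L p - 1, 0 < i ∧ i < L p ∧ z = Sum.inr ⟨p, ⟨i - 1, h⟩⟩)

/-- The graph obtained from the base vertex set `B` by adding, for each `p : P`, an
internally vertex-disjoint path of length `L p` between the vertices `e0 p` and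
`e1 p` (for `L p = 1` this is just an edge). -/
def pathGraph (e0 e1 : P → B) (L : P → ℕ) : SimpleGraph (Vert B P L) where
  Adj x y := x ≠ y ∧ ∃ p i, i < L p ∧
    ((pos e0 e1 L p i x ∧ pos e0 e1 L p (i + 1) y) ∨
     (pos e0 e1 L p i y ∧ pos e0 e1 L p (i + 1) x))
  symm := ⟨by
    rintro x y ⟨hne, p, i, hi, h⟩
    exact ⟨hne.symm, p, i, hi, h.symm⟩⟩
  loopless := ⟨fun x h => h.1 rfl⟩

/-- Base (named) vertices of the radius-construction graph `G_rad`: two copies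
(`side = false` is the left copy, `side = true` the right copy) of the base vertices
of `G(U,V,w,a)`, with the vertices `u^0` of the two copies identified. -/
inductive Base (ℓ : ℕ) (U V : Set (Fin ℓ → Bool)) : Type
  | cU (side : Bool) (c : Fin ℓ)
  | cV (side : Bool) (c : Fin ℓ)
  | u0 (u : U)                       -- shared between the two copies
  | ua (side : Bool) (u : U)
  | v0 (side : Bool) (v : V)
  | va (side : Bool) (v : V)
  | x (side : Bool)
  | y (side : Bool)

/-- Path requests of the radius-construction graph `G_rad` (each request of
`G(U,V,w,a)` appears once per side). -/
inductive Pth (ℓ : ℕ) (U V : Set (Fin ℓ → Bool)) (w : Fin ℓ → Bool) : Type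
  | upath (side : Bool) (u : U)                                 -- u^0 … u^a, length a
  | vpath (side : Bool) (v : V)                                 -- v^0 … v^a, length a
  | uc (side : Bool) (u : U) (c : Fin ℓ) (h : u.1 c = true)     -- u^a — c_U, length a
  | vc (side : Bool) (v : V) (c : Fin ℓ) (h : v.1 c = true)     -- c_V — v^0, length a
  | wc (side : Bool) (c : Fin ℓ) (h : w c = true)               -- edge c_U — c_V
  | xu (side : Bool) (u : U)                                    -- x — u^a, length a
  | yv (side : Bool) (v : V)                                    -- y — v^0, length a

variable {ℓ : ℕ} {U V : Set (Fin ℓ → Bool)} {w : Fin ℓ → Bool}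

/-- First endpoint of each path request. -/
def e0 : Pth ℓ U V w → Base ℓ U V
  | .upath _ u => .u0 u
  | .vpath s v => .v0 s v
  | .uc s u _ _ => .ua s u
  | .vc s _ c _ => .cV s c
  | .wc s c _ => .cU s c
  | .xu s _ => .x s
  | .yv s _ => .y s

/-- Second endpoint of each path request. -/
def e1 : Pth ℓ U V w → Base ℓ U V
  | .upath s u => .ua s u
  | .vpath s v => .va s v
  | .uc s _ c _ => .cU s c
  | .vc s v _ _ => .v0 s v
  | .wc s c _ => .cV s c
  | .xu s u => .ua s u
  | .yv s v => .v0 s v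

/-- Length of each path request: the `c_U — c_V` connections are single edges,
all other paths have length `a`. -/
def len (a : ℕ) : Pth ℓ U V w → ℕ
  | .wc _ _ _ => 1
  | _ => a

/-- The radius-construction graph `G_rad`: two copies of `G(U,V,w,a)` with the
vertices `u^0` identified. -/
def Grad (a ℓ : ℕ) (U V : Set (Fin ℓ → Bool)) (w : Fin ℓ → Bool) :
    SimpleGraph (Vert (Base ℓ U V) (Pth ℓ U V w) (len a)) :=
  pathGraph e0 e1 (len a)

end RadConstr

theorem SimpleGraph.Walk.apply_le_apply_add_length {α : Type*} {G : SimpleGraph α}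
    (f : α → ℕ) (hf : ∀ x y, G.Adj x y → f x ≤ f y + 1) {z t : α} (W : G.Walk z t) :
    f z ≤ f t + W.length := by
  induction W with
  | nil => simp
  | cons hadj _ ih =>
    have := hf _ _ hadj
    rw [SimpleGraph.Walk.length_cons]
    omega

namespace RadConstr

section Interpolation

variable {B P : Type*} (E0 E1 : P → B) (L : P → ℕ) (φ : B → ℕ)

def PathCompatible : Prop :=
  ∀ p, φ (E0 p) ≤ φ (E1 p) + L p ∧ φ (E1 p) ≤ φ (E0 p) + L p

/-- The internal vertex `⟨p, j⟩` is the `(j + 1)`-th vertex of the path `p`. -/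
def interpolate : Vert B P L → ℕ
  | .inl b => φ b
  | .inr ⟨p, j⟩ => max (φ (E0 p) - (j.1 + 1)) (φ (E1 p) - (L p - (j.1 + 1)))

variable {E0 E1 L φ}

@[simp]
theorem interpolate_inl (b : B) : interpolate E0 E1 L φ (.inl b) = φ b := rfl

theorem interpolate_of_pos (hφ : PathCompatible E0 E1 L φ) {p : P} {i : ℕ} {z : Vert B P L}
    (h : pos E0 E1 L p i z) :
    interpolate E0 E1 L φ z = max (φ (E0 p) - i) (φ (E1 p) - (L p - i)) := by
  have := hφ p
  obtain ⟨rfl, rfl⟩ | ⟨rfl, rfl⟩ | ⟨-, hi0, -, rfl⟩ := h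
  · simp only [interpolate]
    omega
  · simp only [interpolate]
    omega
  · simp only [interpolate, Nat.sub_add_cancel hi0]

theorem interpolate_le_of_adj (hφ : PathCompatible E0 E1 L φ) {x y : Vert B P L}
    (h : (pathGraph E0 E1 L).Adj x y) :
    interpolate E0 E1 L φ x ≤ interpolate E0 E1 L φ y + 1 := by
  obtain ⟨-, p, i, -, ⟨hx, hy⟩ | ⟨hy, hx⟩⟩ := h <;>
    rw [interpolate_of_pos hφ hx, interpolate_of_pos hφ hy] <;>
    omega

theorem interpolate_le_add_length (hφ : PathCompatible E0 E1 L φ) {z t : Vert B P L}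
    (W : (pathGraph E0 E1 L).Walk z t) :
    interpolate E0 E1 L φ z ≤ interpolate E0 E1 L φ t + W.length :=
  W.apply_le_apply_add_length _ fun _ _ => interpolate_le_of_adj hφ

theorem max_add_one_le_interpolate_inr (p : P) (j : Fin (L p - 1)) :
    max (φ (E0 p)) (φ (E1 p)) + 1 ≤ interpolate E0 E1 L φ (.inr ⟨p, j⟩) + L p := by
  have := j.2
  simp only [interpolate]
  omega

end Interpolation

section Potentials

variable {ℓ : ℕ} {U V : Set (Fin ℓ → Bool)} {w : Fin ℓ → Bool} {a : ℕ}

def Hits (w : Fin ℓ → Bool) (u : U) (v : V) : Prop :=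
  ∃ c, u.1 c = true ∧ v.1 c = true ∧ w c = true

/-- Lower bounds on the distance from `y` in the copy `s`. -/
def potentialY (a : ℕ) (s : Bool) : Base ℓ U V → ℕ
  | .cU s' _ => if s' = s then 2*a+1 else 6*a+1
  | .cV s' _ => if s' = s then 2*a else 6*a+2
  | .u0 _ => 4*a+1
  | .ua s' _ => if s' = s then 3*a+1 else 5*a+1
  | .v0 s' _ => if s' = s then a else 7*a+2
  | .va s' _ => if s' = s then 2*a else 8*a+2
  | .x s' => if s' = s then 4*a+1 else 6*a+1
  | .y s' => if s' = s then 0 else 8*a+2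

open Classical in
/-- Lower bounds on the distance from `v₀^a` in the copy `s`. -/
noncomputable def potentialVa (a : ℕ) (w : Fin ℓ → Bool) (v₀ : V) (s : Bool) :
    Base ℓ U V → ℕ
  | .cU s' c => if s' = s then (if v₀.1 c = true ∧ w c = true then 2*a+1 else 4*a+1)
      else (if ∃ u : U, u.1 c = true ∧ Hits w u v₀ then 6*a+1 else 8*a+1)
  | .cV s' c => if s' = s then (if v₀.1 c = true then 2*a else 4*a)
      else (if (∃ u : U, u.1 c = true ∧ Hits w u v₀) ∧ w c = true then 6*a+2 else 8*a+2)
  | .u0 u => if Hits w u v₀ then 4*a+1 else 6*a+1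
  | .ua s' u => if s' = s then (if Hits w u v₀ then 3*a+1 else 5*a+1)
      else (if Hits w u v₀ then 5*a+1 else 7*a+1)
  | .v0 s' v => if s' = s then (if v = v₀ then a else 3*a) else 7*a+2
  | .va s' v => if s' = s then (if v = v₀ then 0 else 4*a) else 8*a+2
  | .x s' => if s' = s then 4*a+1 else (if ∃ u : U, Hits w u v₀ then 6*a+1 else 8*a+1)
  | .y s' => if s' = s then 2*a else 8*a+2

theorem potentialY_compatible (a : ℕ) (s : Bool) :
    PathCompatible (e0 : Pth ℓ U V w → Base ℓ U V) e1 (len a) (potentialY a s) := by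
  intro p
  cases p <;> simp only [e0, e1, len, potentialY] <;> split_ifs <;> omega

theorem potentialVa_compatible (a : ℕ) (v₀ : V) (s : Bool) :
    PathCompatible (e0 : Pth ℓ U V w → Base ℓ U V) e1 (len a) (potentialVa a w v₀ s) := by
  classical
  intro p
  cases p with
  | uc s' u c hc =>
    by_cases hu : Hits w u v₀
    · have hc' : ∃ u' : U, u'.1 c = true ∧ Hits w u' v₀ := ⟨u, hc, hu⟩
      simp only [e0, e1, len, potentialVa, if_pos hu, if_pos hc']
      split_ifs <;> omega
    · have hvw : ¬(v₀.1 c = true ∧ w c = true) := fun h => hu ⟨c, hc, h⟩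
      simp only [e0, e1, len, potentialVa, if_neg hu, if_neg hvw]
      split_ifs <;> omega
  | vc s' v c hc =>
    by_cases hv : v = v₀
    · subst hv
      simp only [e0, e1, len, potentialVa, if_pos hc]
      split_ifs <;> omega
    · simp only [e0, e1, len, potentialVa, if_neg hv]
      split_ifs <;> omega
  | xu s' u =>
    by_cases hu : Hits w u v₀
    · simp only [e0, e1, len, potentialVa, if_pos hu, if_pos (⟨u, hu⟩ : ∃ u, Hits w u v₀)]
      split_ifs <;> omega
    · simp only [e0, e1, len, potentialVa, if_neg hu]
      split_ifs <;> omega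
  | wc s' c hc =>
    simp only [e0, e1, len, potentialVa, hc, and_true]
    split_ifs <;> omega
  | upath | vpath | yv => simp only [e0, e1, len, potentialVa]; split_ifs <;> omega

theorem le_length_of_le_potentialY {s : Bool} {n : ℕ}
    {z : Vert (Base ℓ U V) (Pth ℓ U V w) (len a)}
    (hz : n ≤ interpolate e0 e1 (len a) (potentialY a s) z)
    (W : (Grad a ℓ U V w).Walk z (.inl (.y s))) : n ≤ W.length := by
  have := interpolate_le_add_length (potentialY_compatible a s) W
  simp only [interpolate_inl, potentialY, if_true, zero_add] at this
  exact hz.trans this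

theorem le_length_of_le_potentialVa {v₀ : V} {s : Bool} {n : ℕ}
    {z : Vert (Base ℓ U V) (Pth ℓ U V w) (len a)}
    (hz : n ≤ interpolate e0 e1 (len a) (potentialVa a w v₀ s) z)
    (W : (Grad a ℓ U V w).Walk z (.inl (.va s v₀))) : n ≤ W.length := by
  have := interpolate_le_add_length (potentialVa_compatible a v₀ s) W
  simp only [interpolate_inl, potentialVa, if_true, zero_add] at this
  exact hz.trans this

theorem exists_far_from_inl (hmiss : ∀ u : U, ∃ v : V, ¬Hits w u v) (b : Base ℓ U V) :
    ∃ t, ∀ W : (Grad a ℓ U V w).Walk (.inl b) t, 6 * a + 1 ≤ W.length := by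
  cases b with
  | cU s _ | cV s _ | v0 s _ | va s _ | x s | y s =>
    refine ⟨_, le_length_of_le_potentialY (s := !s) ?_⟩
    cases s <;>
      simp only [interpolate_inl, potentialY,
        Bool.not_true, Bool.not_false, Bool.true_eq_false, Bool.false_eq_true, ↓reduceIte] <;>
      omega
  | u0 u =>
    obtain ⟨v, hv⟩ := hmiss u
    exact ⟨_, le_length_of_le_potentialVa (v₀ := v) (s := true) (by simp [potentialVa, hv])⟩
  | ua s u =>
    obtain ⟨v, hv⟩ := hmiss u
    refine ⟨_, le_length_of_le_potentialVa (v₀ := v) (s := !s) ?_⟩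
    cases s <;>
      simp only [interpolate_inl, potentialVa, hv,
        Bool.not_true, Bool.not_false, Bool.true_eq_false, Bool.false_eq_true, ↓reduceIte] <;>
      omega

theorem exists_far_from_inr (hmiss : ∀ u : U, ∃ v : V, ¬Hits w u v) (p : Pth ℓ U V w)
    (j : Fin (len a p - 1)) :
    ∃ t, ∀ W : (Grad a ℓ U V w).Walk (.inr ⟨p, j⟩) t, 6 * a + 1 ≤ W.length := by
  cases p with
  | wc => exact j.elim0
  | upath s u | uc s u _ _ | xu s u =>
    obtain ⟨v, hv⟩ := hmiss u
    refine ⟨_, le_length_of_le_potentialVa (v₀ := v) (s := !s) ?_⟩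
    have := max_add_one_le_interpolate_inr (E0 := e0) (E1 := e1) (φ := potentialVa a w v (!s)) _ j
    cases s <;>
      simp only [e0, e1, len, potentialVa, hv,
        Bool.not_true, Bool.not_false, Bool.true_eq_false, Bool.false_eq_true, ↓reduceIte]
        at this ⊢ <;>
      omega
  | vpath s _ | vc s _ _ _ | yv s _ =>
    refine ⟨_, le_length_of_le_potentialY (s := !s) ?_⟩
    have := max_add_one_le_interpolate_inr (E0 := e0) (E1 := e1) (φ := potentialY a (!s)) _ j
    cases s <;>
      simp only [e0, e1, len, potentialY,
        Bool.not_true, Bool.not_false, Bool.true_eq_false, Bool.false_eq_true, ↓reduceIte]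
        at this ⊢ <;>
      omega

end Potentials

end RadConstr

open RadConstr in
theorem radius_construction_no_case_general
    (a ℓ : ℕ)
    (U V : Set (Fin ℓ → Bool)) (w : Fin ℓ → Bool)
    (hmiss : ∀ u ∈ U, ∃ v ∈ V, ∀ c : Fin ℓ, ¬(u c = true ∧ v c = true ∧ w c = true)) :
    ∀ z : Vert (Base ℓ U V) (Pth ℓ U V w) (len a),
      ∃ t : Vert (Base ℓ U V) (Pth ℓ U V w) (len a),
        ∀ p : (Grad a ℓ U V w).Walk z t, 6 * a + 1 ≤ p.length := by
  have hmiss' : ∀ u : U, ∃ v : V, ¬Hits w u v := fun u =>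
    let ⟨v, hv, hmissv⟩ := hmiss u u.2
    ⟨⟨v, hv⟩, fun ⟨c, hc⟩ => hmissv c hc⟩
  rintro (b | ⟨p, j⟩)
  · exact exists_far_from_inl hmiss' b
  · exact exists_far_from_inr hmiss' p j

open RadConstr in
theorem radius_construction_no_case
    (a ℓ : ℕ) (ha : 0 < a) (hℓ : 0 < ℓ)
    (U V : Set (Fin ℓ → Bool)) (hUfin : U.Finite) (hVfin : V.Finite)
    (hU : U.Nonempty) (hV : V.Nonempty) (w : Fin ℓ → Bool)
    (hUone : ∀ u ∈ U, ∃ c, u c = true) (hVone : ∀ v ∈ V, ∃ c, v c = true)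
    (hUcov : ∀ c : Fin ℓ, ∃ u ∈ U, u c = true)
    (hVcov : ∀ c : Fin ℓ, ∃ v ∈ V, v c = true)
    (hmiss : ∀ u ∈ U, ∃ v ∈ V, ∀ c : Fin ℓ, ¬(u c = true ∧ v c = true ∧ w c = true)) :
    ∀ z : Vert (Base ℓ U V) (Pth ℓ U V w) (len a),
      ∃ t : Vert (Base ℓ U V) (Pth ℓ U V w) (len a),
        ∀ p : (Grad a ℓ U V w).Walk z t, 6 * a + 1 ≤ p.length :=
  radius_construction_no_case_general a ℓ U V w hmiss
end

section
/- The 2-OV graph H(U,v,a) is connected, and the vertex s is a center of H(U,v,a): for every vertex y of H(U,v,a), the eccentricity of s is at most the eccentricity of y (so the eccentricity of s equals the radius of H(U,v,a)). -/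
/-!
The vertex `s` separates `H(U,v,a)`: no edge joins a right vertex (`c_right`, `u_right^i`,
or an internal vertex of a right path) to a vertex other than `s` outside the right half.
So every walk from a vertex `y` outside the right half to a vertex `z` inside it passes
through `s`, giving `d(s,z) ≤ d(y,z)`. The left–right reflection is an automorphism fixing
`s` that exchanges the two halves; applying the inequality to the reflection of a left
vertex `z` bounds `d(s,z)` as well, hence `ecc s ≤ ecc y` for every `y` outside the right
half, and for `y` inside it via `ecc y = ecc (reflection of y)`. Connectivity holds since
every path has positive length and each `u` has a coordinate `c` with `u[c] = 1`,
which links `u_left^a` and `u_right^a` to `s` through `c_left` and `c_right`.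
-/

namespace OVConstr

variable {B P : Type*}

/-- Vertices of a graph assembled from base vertices `B` and, for each path request
`p : P` of length `L p`, the `L p - 1` internal vertices of the path. -/
abbrev Vert (B P : Type*) (L : P → ℕ) : Type _ := B ⊕ (Σ p : P, Fin (L p - 1))

/-- `pos e0 e1 L p i z` : `z` is the `i`-th vertex along the path `p`
(whose endpoints are `e0 p` and `e1 p` and whose length is `L p`). -/
def pos (e0 e1 : P → B) (L : P → ℕ) (p : P) (i : ℕ) (z : Vert B P L) : Prop :=
  (i = 0 ∧ z = Sum.inl (e0 p)) ∨ (i = L p ∧ z = Sum.inl (e1 p)) ∨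
    (∃ h : i - 1 < L p - 1, 0 < i ∧ i < L p ∧ z = Sum.inr ⟨p, ⟨i - 1, h⟩⟩)

/-- The graph obtained from the base vertex set `B` by adding, for each `p : P`, an
internally vertex-disjoint path of length `L p` between the vertices `e0 p` and
`e1 p` (for `L p = 1` this is just an edge). -/
def pathGraph (e0 e1 : P → B) (L : P → ℕ) : SimpleGraph (Vert B P L) where
  Adj x y := x ≠ y ∧ ∃ p i, i < L p ∧
    ((pos e0 e1 L p i x ∧ pos e0 e1 L p (i + 1) y) ∨
     (pos e0 e1 L p i y ∧ pos e0 e1 L p (i + 1) x))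
  symm := by
    constructor
    rintro x y ⟨hne, p, i, hi, h⟩
    exact ⟨hne.symm, p, i, hi, h.symm⟩
  loopless := ⟨fun x h => h.1 rfl⟩

/-- Base (named) vertices of the 2-OV graph `H(U,v,a)`. -/
inductive Base (ℓ : ℕ) (U : Set (Fin ℓ → Bool)) : Type
  | s
  | cL (c : Fin ℓ)
  | cR (c : Fin ℓ)
  | uL0 (u : U)
  | uLa (u : U)
  | uR0 (u : U)
  | uRa (u : U)

/-- Path requests of the 2-OV graph `H(U,v,a)`. -/
inductive Pth (ℓ : ℕ) (U : Set (Fin ℓ → Bool)) (v : Fin ℓ → Bool) : Type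
  | scL (c : Fin ℓ)                                    -- s — c_left, length 2a
  | scR (c : Fin ℓ)                                    -- s — c_right, length 2a
  | uLpath (u : U)                                     -- u_left^0 … u_left^a, length a
  | uRpath (u : U)                                     -- u_right^0 … u_right^a, length a
  | ucL (u : U) (c : Fin ℓ) (h : u.1 c = true)         -- u_left^a — c_left, length a
  | ucR (u : U) (c : Fin ℓ) (h : u.1 c = true)         -- u_right^a — c_right, length a
  | vcL (c : Fin ℓ) (h : v c = true)                   -- edge s — c_left
  | vcR (c : Fin ℓ) (h : v c = true)                   -- edge s — c_right

variable {ℓ : ℕ} {U : Set (Fin ℓ → Bool)} {v : Fin ℓ → Bool}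

/-- First endpoint of each path request. -/
def e0 : Pth ℓ U v → Base ℓ U
  | .scL _ => .s
  | .scR _ => .s
  | .uLpath u => .uL0 u
  | .uRpath u => .uR0 u
  | .ucL u _ _ => .uLa u
  | .ucR u _ _ => .uRa u
  | .vcL _ _ => .s
  | .vcR _ _ => .s

/-- Second endpoint of each path request. -/
def e1 : Pth ℓ U v → Base ℓ U
  | .scL c => .cL c
  | .scR c => .cR c
  | .uLpath u => .uLa u
  | .uRpath u => .uRa u
  | .ucL _ c _ => .cL c
  | .ucR _ c _ => .cR c
  | .vcL c _ => .cL c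
  | .vcR c _ => .cR c

/-- Length of each path request: the `s — c_left`/`s — c_right` paths have length
`2a`, the `v`-edges have length `1`, all other paths have length `a`. -/
def len (a : ℕ) : Pth ℓ U v → ℕ
  | .scL _ => 2 * a
  | .scR _ => 2 * a
  | .vcL _ _ => 1
  | .vcR _ _ => 1
  | _ => a

/-- The 2-OV graph `H(U,v,a)`. -/
def H (a ℓ : ℕ) (U : Set (Fin ℓ → Bool)) (v : Fin ℓ → Bool) :
    SimpleGraph (Vert (Base ℓ U) (Pth ℓ U v) (len a)) :=
  pathGraph e0 e1 (len a)

/-- The eccentricity (in `ℕ∞`) of a vertex `z`: the supremum of the distances from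
`z` to all vertices. -/
noncomputable def ecc (a ℓ : ℕ) (U : Set (Fin ℓ → Bool)) (v : Fin ℓ → Bool)
    (z : Vert (Base ℓ U) (Pth ℓ U v) (len a)) : ℕ∞ :=
  ⨆ y, (H a ℓ U v).edist z y

end OVConstr

namespace SimpleGraph

variable {V W : Type*} {G : SimpleGraph V} {G' : SimpleGraph W}

lemma Hom.edist_map_le (f : G →g G') (u v : V) : G'.edist (f u) (f v) ≤ G.edist u v := by
  by_cases hr : G.Reachable u v
  · obtain ⟨w, hw⟩ := hr.exists_walk_length_eq_edist
    rw [← hw, ← w.length_map f]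
    exact edist_le _
  · rw [edist_eq_top_of_not_reachable hr]
    exact le_top

lemma Iso.edist_map (f : G ≃g G') (u v : V) : G'.edist (f u) (f v) = G.edist u v :=
  le_antisymm (f.toHom.edist_map_le u v) <| by
    simpa using f.symm.toHom.edist_map_le (f u) (f v)

lemma Iso.eccent_map (f : G ≃g G') (u : V) : G'.eccent (f u) = G.eccent u := by
  simp only [eccent_def, ← f.surjective.iSup_comp, f.edist_map]

def IsSeparatingVertex (G : SimpleGraph V) (s : V) (R : Set V) : Prop :=
  ∀ ⦃x y⦄, G.Adj x y → x ∉ R → y ∈ R → x = s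

lemma IsSeparatingVertex.edist_le_length {s : V} {R : Set V} (hs : G.IsSeparatingVertex s R)
    {y z : V} (w : G.Walk y z) (hy : y ∉ R) (hz : z ∈ R) : G.edist s z ≤ w.length := by
  induction w with
  | nil => exact absurd hz hy
  | @cons y y' z hadj w ih =>
    by_cases hy' : y' ∈ R
    · obtain rfl := hs hadj hy hy'
      exact edist_le _
    · calc G.edist s z ≤ w.length := ih hy' hz
        _ ≤ (Walk.cons hadj w).length := by simp

lemma IsSeparatingVertex.edist_le {s : V} {R : Set V} (hs : G.IsSeparatingVertex s R)
    {y z : V} (hy : y ∉ R) (hz : z ∈ R) : G.edist s z ≤ G.edist y z := by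
  by_cases hr : G.Reachable y z
  · obtain ⟨w, hw⟩ := hr.exists_walk_length_eq_edist
    exact hw ▸ hs.edist_le_length w hy hz
  · rw [edist_eq_top_of_not_reachable hr]
    exact le_top

theorem IsSeparatingVertex.eccent_le (σ : G ≃g G) {s : V} {R : Set V}
    (hs : G.IsSeparatingVertex s R) (hσs : σ s = s) (hσR : ∀ z ∈ R, σ z ∉ R)
    (hσcompl : ∀ z, z ≠ s → z ∉ R → σ z ∈ R) (y : V) : G.eccent s ≤ G.eccent y := by
  have key : ∀ y ∉ R, G.eccent s ≤ G.eccent y := by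
    intro y hy
    refine (eccent_le_iff _ _).2 fun z => ?_
    by_cases hzs : z = s
    · simp [hzs]
    by_cases hzR : z ∈ R
    · exact (hs.edist_le hy hzR).trans edist_le_eccent
    · calc G.edist s z = G.edist s (σ z) := by rw [← σ.edist_map, hσs]
        _ ≤ G.edist y (σ z) := hs.edist_le hy (hσcompl z hzs hzR)
        _ ≤ G.eccent y := edist_le_eccent
  by_cases hy : y ∈ R
  · exact σ.eccent_map y ▸ key _ (hσR y hy)
  · exact key y hy

end SimpleGraph

namespace OVConstr

section PathGraph

variable {B P : Type*} (e0 e1 : P → B) (L : P → ℕ)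

def pathVertex (p : P) (i : ℕ) : Vert B P L :=
  if h : 0 < i ∧ i < L p then Sum.inr ⟨p, ⟨i - 1, by omega⟩⟩
  else if i = 0 then Sum.inl (e0 p) else Sum.inl (e1 p)

variable {e0 e1 L} {p : P} {i j : ℕ}

lemma pathVertex_zero : pathVertex e0 e1 L p 0 = Sum.inl (e0 p) := by
  simp [pathVertex]

lemma pathVertex_length (hL : 0 < L p) : pathVertex e0 e1 L p (L p) = Sum.inl (e1 p) := by
  simp [pathVertex, hL.ne']

lemma pathVertex_succ (k : Fin (L p - 1)) : pathVertex e0 e1 L p (k + 1) = Sum.inr ⟨p, k⟩ := by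
  simp [pathVertex]
  omega

lemma pos_pathVertex (hi : i ≤ L p) : pos e0 e1 L p i (pathVertex e0 e1 L p i) := by
  unfold pathVertex
  split_ifs with h1 h2
  · exact Or.inr (Or.inr ⟨by omega, h1.1, h1.2, rfl⟩)
  · exact Or.inl ⟨h2, rfl⟩
  · exact Or.inr (Or.inl ⟨by omega, rfl⟩)

lemma pos_unique (he : e0 p ≠ e1 p) {z : Vert B P L} (hi : pos e0 e1 L p i z)
    (hj : pos e0 e1 L p j z) : i = j := by
  rcases hi with ⟨rfl, rfl⟩ | ⟨rfl, rfl⟩ | ⟨_, hi0, _, rfl⟩ <;>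
    rcases hj with ⟨rfl, h⟩ | ⟨rfl, h⟩ | ⟨_, hj0, _, h⟩ <;> simp_all [eq_comm]
  omega

lemma adj_pathVertex (he : e0 p ≠ e1 p) (hi : i < L p) :
    (pathGraph e0 e1 L).Adj (pathVertex e0 e1 L p i) (pathVertex e0 e1 L p (i + 1)) := by
  refine ⟨fun h => ?_, p, i, hi, Or.inl ⟨pos_pathVertex hi.le, pos_pathVertex hi⟩⟩
  have := pos_unique he (pos_pathVertex hi.le) (h ▸ pos_pathVertex hi)
  omega

lemma reachable_pathVertex (he : e0 p ≠ e1 p) (hi : i ≤ L p) :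
    (pathGraph e0 e1 L).Reachable (Sum.inl (e0 p)) (pathVertex e0 e1 L p i) := by
  induction i with
  | zero => rw [pathVertex_zero]
  | succ i ih => exact (ih (by omega)).trans (adj_pathVertex he hi).reachable

lemma reachable_endpoints (he : e0 p ≠ e1 p) (hL : 0 < L p) :
    (pathGraph e0 e1 L).Reachable (Sum.inl (e0 p)) (Sum.inl (e1 p)) := by
  simpa only [pathVertex_length hL] using reachable_pathVertex (L := L) he le_rfl

lemma pathGraph_connected (he : ∀ p, e0 p ≠ e1 p) (b₀ : B)
    (hB : ∀ b, (pathGraph e0 e1 L).Reachable (Sum.inl b₀) (Sum.inl b)) :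
    (pathGraph e0 e1 L).Connected := by
  refine (SimpleGraph.connected_iff_exists_forall_reachable _).2 ⟨Sum.inl b₀, ?_⟩
  rintro (b | ⟨p, k⟩)
  · exact hB b
  · exact (hB (e0 p)).trans (pathVertex_succ k ▸ reachable_pathVertex (he p) (by omega))

end PathGraph

section Involution

variable {B P : Type*} {e0 e1 : P → B} {L : P → ℕ} {fB : B → B} {fP : P → P}

def Vert.map (fB : B → B) (fP : P → P) (hL : ∀ p, L (fP p) = L p) :
    Vert B P L → Vert B P L
  | Sum.inl b => Sum.inl (fB b)
  | Sum.inr ⟨p, i⟩ => Sum.inr ⟨fP p, Fin.cast (by rw [hL]) i⟩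

variable (hL : ∀ p, L (fP p) = L p)

lemma Vert.map_involutive (hB : Function.Involutive fB) (hP : Function.Involutive fP) :
    Function.Involutive (Vert.map fB fP hL) := by
  rintro (b | ⟨p, i⟩)
  · simp [Vert.map, hB b]
  · simp only [Vert.map, Sum.inr.injEq]
    exact Sigma.ext (hP p) ((Fin.heq_ext_iff (by rw [hL, hL])).2 rfl)

lemma pos_map (h0 : ∀ p, e0 (fP p) = fB (e0 p)) (h1 : ∀ p, e1 (fP p) = fB (e1 p))
    {p : P} {i : ℕ} {z : Vert B P L} (h : pos e0 e1 L p i z) :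
    pos e0 e1 L (fP p) i (Vert.map fB fP hL z) := by
  rcases h with ⟨hi, rfl⟩ | ⟨hi, rfl⟩ | ⟨_, hi0, hi, rfl⟩
  · exact Or.inl ⟨hi, by simp [Vert.map, h0]⟩
  · exact Or.inr (Or.inl ⟨by rw [hL, hi], by simp [Vert.map, h1]⟩)
  · exact Or.inr (Or.inr ⟨by rw [hL]; omega, hi0, by rw [hL]; exact hi, rfl⟩)

lemma pathGraph_adj_map (h0 : ∀ p, e0 (fP p) = fB (e0 p)) (h1 : ∀ p, e1 (fP p) = fB (e1 p))
    (hinj : Function.Injective (Vert.map fB fP hL)) {x y : Vert B P L}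
    (h : (pathGraph e0 e1 L).Adj x y) :
    (pathGraph e0 e1 L).Adj (Vert.map fB fP hL x) (Vert.map fB fP hL y) := by
  obtain ⟨hne, p, i, hi, hxy⟩ := h
  have hpos {j z} : pos e0 e1 L p j z → _ := pos_map hL h0 h1
  exact ⟨hinj.ne hne, fP p, i, hL p ▸ hi, hxy.imp (And.imp hpos hpos) (And.imp hpos hpos)⟩

def pathGraph.isoOfInvolutive (h0 : ∀ p, e0 (fP p) = fB (e0 p))
    (h1 : ∀ p, e1 (fP p) = fB (e1 p)) (hB : Function.Involutive fB)
    (hP : Function.Involutive fP) :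
    pathGraph e0 e1 L ≃g pathGraph e0 e1 L where
  toEquiv := (Vert.map_involutive hL hB hP).toPerm _
  map_rel_iff' {x y} := by
    have hinv := Vert.map_involutive hL hB hP
    refine ⟨fun h => ?_, pathGraph_adj_map hL h0 h1 hinv.injective⟩
    simpa only [Function.Involutive.coe_toPerm, hinv _] using
      pathGraph_adj_map hL h0 h1 hinv.injective h

end Involution

variable {a ℓ : ℕ} {U : Set (Fin ℓ → Bool)} {v : Fin ℓ → Bool}

def Base.mirror : Base ℓ U → Base ℓ U
  | .s => .s
  | .cL c => .cR c
  | .cR c => .cL c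
  | .uL0 u => .uR0 u
  | .uR0 u => .uL0 u
  | .uLa u => .uRa u
  | .uRa u => .uLa u

def Pth.mirror : Pth ℓ U v → Pth ℓ U v
  | .scL c => .scR c
  | .scR c => .scL c
  | .uLpath u => .uRpath u
  | .uRpath u => .uLpath u
  | .ucL u c h => .ucR u c h
  | .ucR u c h => .ucL u c h
  | .vcL c h => .vcR c h
  | .vcR c h => .vcL c h

lemma Base.mirror_involutive : Function.Involutive (Base.mirror : Base ℓ U → Base ℓ U) := by
  intro b; cases b <;> rfl

lemma Pth.mirror_involutive : Function.Involutive (Pth.mirror : Pth ℓ U v → Pth ℓ U v) := by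
  intro p; cases p <;> rfl

lemma len_mirror (p : Pth ℓ U v) : len a p.mirror = len a p := by cases p <;> rfl

lemma e0_mirror (p : Pth ℓ U v) : e0 p.mirror = (e0 p).mirror := by cases p <;> rfl

lemma e1_mirror (p : Pth ℓ U v) : e1 p.mirror = (e1 p).mirror := by cases p <;> rfl

def mirror (a ℓ : ℕ) (U : Set (Fin ℓ → Bool)) (v : Fin ℓ → Bool) :
    H a ℓ U v ≃g H a ℓ U v :=
  pathGraph.isoOfInvolutive len_mirror e0_mirror e1_mirror
    Base.mirror_involutive Pth.mirror_involutive

def Base.IsRight : Base ℓ U → Prop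
  | .cR _ | .uR0 _ | .uRa _ => True
  | _ => False

def Pth.IsRight : Pth ℓ U v → Prop
  | .scR _ | .uRpath _ | .ucR _ _ _ | .vcR _ _ => True
  | _ => False

def rightHalf (a ℓ : ℕ) (U : Set (Fin ℓ → Bool)) (v : Fin ℓ → Bool) :
    Set (Vert (Base ℓ U) (Pth ℓ U v) (len a))
  | Sum.inl b => b.IsRight
  | Sum.inr ⟨p, _⟩ => p.IsRight

lemma Pth.IsRight.of_isRight_endpoint {p : Pth ℓ U v} (h : (e0 p).IsRight ∨ (e1 p).IsRight) :
    p.IsRight := by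
  cases p <;> simp_all [e0, e1, Base.IsRight, Pth.IsRight]

lemma Pth.IsRight.endpoints {p : Pth ℓ U v} (h : p.IsRight) :
    (e0 p = .s ∨ (e0 p).IsRight) ∧ (e1 p).IsRight := by
  cases p <;> simp_all [e0, e1, Base.IsRight, Pth.IsRight]

lemma Pth.isRight_of_pos {p : Pth ℓ U v} {i : ℕ} {z : Vert (Base ℓ U) (Pth ℓ U v) (len a)}
    (h : pos e0 e1 (len a) p i z) (hz : z ∈ rightHalf a ℓ U v) : p.IsRight := by
  rcases h with ⟨_, rfl⟩ | ⟨_, rfl⟩ | ⟨_, _, _, rfl⟩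
  · exact .of_isRight_endpoint (.inl hz)
  · exact .of_isRight_endpoint (.inr hz)
  · exact hz

lemma Pth.IsRight.pos_mem_rightHalf {p : Pth ℓ U v} (hp : p.IsRight) {i : ℕ}
    {z : Vert (Base ℓ U) (Pth ℓ U v) (len a)} (h : pos e0 e1 (len a) p i z) :
    z = Sum.inl .s ∨ z ∈ rightHalf a ℓ U v := by
  rcases h with ⟨_, rfl⟩ | ⟨_, rfl⟩ | ⟨_, _, _, rfl⟩
  · exact hp.endpoints.1.imp (congrArg _) id
  · exact .inr hp.endpoints.2
  · exact .inr hp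

lemma isSeparatingVertex_s_rightHalf :
    (H a ℓ U v).IsSeparatingVertex (Sum.inl .s) (rightHalf a ℓ U v) := by
  rintro x y ⟨-, p, i, -, hxy⟩ hx hy
  have key {j k} (hxp : pos e0 e1 (len a) p j x) (hyp : pos e0 e1 (len a) p k y) :
      x = Sum.inl .s :=
    ((Pth.isRight_of_pos hyp hy).pos_mem_rightHalf hxp).resolve_right hx
  rcases hxy with ⟨hxp, hyp⟩ | ⟨hyp, hxp⟩
  · exact key hxp hyp
  · exact key hxp hyp

lemma mirror_s : mirror a ℓ U v (Sum.inl .s) = Sum.inl .s := rfl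

lemma Base.IsRight.not_mirror {b : Base ℓ U} (h : b.IsRight) : ¬ b.mirror.IsRight := by
  cases b <;> simp_all [Base.mirror, Base.IsRight]

lemma Base.isRight_mirror {b : Base ℓ U} (hs : b ≠ .s) (h : ¬ b.IsRight) :
    b.mirror.IsRight := by
  cases b <;> simp_all [Base.mirror, Base.IsRight]

lemma Pth.IsRight.not_mirror {p : Pth ℓ U v} (h : p.IsRight) : ¬ p.mirror.IsRight := by
  cases p <;> simp_all [Pth.mirror, Pth.IsRight]

lemma Pth.isRight_mirror {p : Pth ℓ U v} (h : ¬ p.IsRight) : p.mirror.IsRight := by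
  cases p <;> simp_all [Pth.mirror, Pth.IsRight]

lemma mirror_not_mem_rightHalf {z : Vert (Base ℓ U) (Pth ℓ U v) (len a)}
    (hz : z ∈ rightHalf a ℓ U v) : mirror a ℓ U v z ∉ rightHalf a ℓ U v := by
  rcases z with b | ⟨p, i⟩
  · exact Base.IsRight.not_mirror hz
  · exact Pth.IsRight.not_mirror hz

lemma mirror_mem_rightHalf {z : Vert (Base ℓ U) (Pth ℓ U v) (len a)} (hs : z ≠ Sum.inl .s)
    (hz : z ∉ rightHalf a ℓ U v) : mirror a ℓ U v z ∈ rightHalf a ℓ U v := by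
  rcases z with b | ⟨p, i⟩
  · exact Base.isRight_mirror (fun h => hs (congrArg _ h)) hz
  · exact Pth.isRight_mirror hz

lemma e0_ne_e1 (p : Pth ℓ U v) : e0 p ≠ e1 p := by
  cases p <;> simp [e0, e1]

lemma len_pos (ha : 0 < a) (p : Pth ℓ U v) : 0 < len a p := by
  cases p <;> simp [len] <;> omega

lemma H_reachable_s_base (ha : 0 < a) (hUone : ∀ u ∈ U, ∃ c, u c = true) (b : Base ℓ U) :
    (H a ℓ U v).Reachable (Sum.inl .s) (Sum.inl b) := by
  have hpath (p : Pth ℓ U v) : (H a ℓ U v).Reachable (Sum.inl (e0 p)) (Sum.inl (e1 p)) :=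
    reachable_endpoints (e0_ne_e1 p) (len_pos ha p)
  have huLa (u : U) : (H a ℓ U v).Reachable (Sum.inl .s) (Sum.inl (.uLa u)) :=
    have ⟨c, hc⟩ := hUone u u.2
    (hpath (.scL c)).trans (hpath (.ucL u c hc)).symm
  have huRa (u : U) : (H a ℓ U v).Reachable (Sum.inl .s) (Sum.inl (.uRa u)) :=
    have ⟨c, hc⟩ := hUone u u.2
    (hpath (.scR c)).trans (hpath (.ucR u c hc)).symm
  cases b with
  | s => rfl
  | cL c => exact hpath (.scL c)
  | cR c => exact hpath (.scR c)
  | uLa u => exact huLa u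
  | uRa u => exact huRa u
  | uL0 u => exact (huLa u).trans (hpath (.uLpath u)).symm
  | uR0 u => exact (huRa u).trans (hpath (.uRpath u)).symm

lemma H_connected (ha : 0 < a) (hUone : ∀ u ∈ U, ∃ c, u c = true) : (H a ℓ U v).Connected :=
  pathGraph_connected e0_ne_e1 .s (H_reachable_s_base ha hUone)

end OVConstr

open OVConstr in
theorem two_ov_graph_s_is_center_general
    (a ℓ : ℕ) (ha : 0 < a)
    (U : Set (Fin ℓ → Bool))
    (hUone : ∀ u ∈ U, ∃ c, u c = true) (v : Fin ℓ → Bool)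
 :
    (H a ℓ U v).Connected ∧
      ∀ y : Vert (Base ℓ U) (Pth ℓ U v) (len a),
        ecc a ℓ U v (Sum.inl Base.s) ≤ ecc a ℓ U v y :=
  ⟨H_connected ha hUone, isSeparatingVertex_s_rightHalf.eccent_le (mirror a ℓ U v) mirror_s
    (fun _ => mirror_not_mem_rightHalf) (fun _ => mirror_mem_rightHalf)⟩

open OVConstr in
theorem two_ov_graph_s_is_center
    (a ℓ : ℕ) (ha : 0 < a) (hℓ : 0 < ℓ)
    (U : Set (Fin ℓ → Bool)) (hUfin : U.Finite) (hU : U.Nonempty)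
    (hUone : ∀ u ∈ U, ∃ c, u c = true) (v : Fin ℓ → Bool)
 :
    (H a ℓ U v).Connected ∧
      ∀ y : Vert (Base ℓ U) (Pth ℓ U v) (len a),
        ecc a ℓ U v (Sum.inl Base.s) ≤ ecc a ℓ U v y :=
  two_ov_graph_s_is_center_general a ℓ ha U hUone v
end

section
/- Suppose that for every u ∈ U and every v ∈ V there exists a coordinate c with u[c] = v[c] = w[c] = 1. Then in the directed eccentricity-construction graph D(U,V,w,a), for every u ∈ U and every vertex z there is a directed walk from u^a to z of length at most a+3 (so the out-eccentricity of every u^a is at most a+3). -/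
/-!
Directed eccentricity-construction graph `D(U,V,w,a)` (Theorem 3.5, "yes" case):
if every `u ∈ U` and `v ∈ V` share a coordinate `c` with `u[c] = v[c] = w[c] = 1`,
then every vertex is reachable from every `u^a` by a directed walk of length at most
`a+3` (so the out-eccentricity of every `u^a` is at most `a+3`).
-/

namespace DirEccConstr

/-- `DiWalk E k p q` : there is a directed walk of length `k` from `p` to `q`
in the digraph with edge relation `E`. -/
def DiWalk {V : Type*} (E : V → V → Prop) (k : ℕ) (p q : V) : Prop :=
  ∃ f : ℕ → V, f 0 = p ∧ f k = q ∧ ∀ i < k, E (f i) (f (i + 1))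

/-- Vertices of the directed eccentricity-construction graph `D(U,V,w,a)`:
coordinate vertices `c_U` and `c_V`, the directed paths `u^0 → … → u^a` and
`v^0 → … → v^a`, the vertices `x` and `y`, and for each coordinate `c` the `a-1`
internal vertices of the directed path of length `a` from `y` to `c_V`. -/
inductive DV (a ℓ : ℕ) (U V : Set (Fin ℓ → Bool)) : Type
  | cU (c : Fin ℓ)
  | cV (c : Fin ℓ)
  | uv (u : U) (i : Fin (a + 1))
  | vv (v : V) (i : Fin (a + 1))
  | x
  | y
  | yp (c : Fin ℓ) (j : Fin (a - 1))

variable {a ℓ : ℕ} {U V : Set (Fin ℓ → Bool)}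

/-- `ypos c i z` : `z` is the `i`-th vertex along the directed path of length `a`
from `y` to `c_V`. -/
def ypos (a : ℕ) (c : Fin ℓ) (i : ℕ) (z : DV a ℓ U V) : Prop :=
  (i = 0 ∧ z = .y) ∨ (i = a ∧ z = .cV c) ∨
    (∃ h : i - 1 < a - 1, 0 < i ∧ i < a ∧ z = .yp c ⟨i - 1, h⟩)

/-- Edge relation of the directed eccentricity-construction graph `D(U,V,w,a)`. -/
def DEdge (a ℓ : ℕ) (U V : Set (Fin ℓ → Bool)) (w : Fin ℓ → Bool) :
    DV a ℓ U V → DV a ℓ U V → Prop := fun p q =>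
  (∃ (u : U) (i : ℕ) (h : i < a),
      p = .uv u ⟨i, Nat.lt_succ_of_lt h⟩ ∧ q = .uv u ⟨i + 1, Nat.succ_lt_succ h⟩) ∨
  (∃ (v : V) (i : ℕ) (h : i < a),
      p = .vv v ⟨i, Nat.lt_succ_of_lt h⟩ ∧ q = .vv v ⟨i + 1, Nat.succ_lt_succ h⟩) ∨
  (∃ (u : U) (c : Fin ℓ), u.1 c = true ∧ p = .uv u (Fin.last a) ∧ q = .cU c) ∨
  (∃ (v : V) (c : Fin ℓ), v.1 c = true ∧ p = .cV c ∧ q = .vv v 0) ∨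
  (∃ u : U, p = .uv u (Fin.last a) ∧ q = .x) ∨
  (∃ u : U, p = .x ∧ q = .uv u 0) ∨
  (∃ c : Fin ℓ, p = .cU c ∧ q = .y) ∨
  (∃ (c : Fin ℓ) (i : ℕ), i < a ∧ ypos a c i p ∧ ypos a c (i + 1) q) ∨
  (∃ c : Fin ℓ, w c = true ∧ p = .cU c ∧ q = .cV c)

end DirEccConstr


namespace DirEccConstr
section
variable {α : Type*} {E : α → α → Prop}

theorem diwalk_refl (E : α → α → Prop) (p : α) : DiWalk E 0 p p :=
  ⟨fun _ => p, rfl, rfl, fun i hi => absurd hi (Nat.not_lt_zero i)⟩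

theorem diwalk_single {p q : α} (h : E p q) : DiWalk E 1 p q :=
  ⟨fun n => if n = 0 then p else q, by simp, by simp, by
    intro i hi
    have : i = 0 := by omega
    subst this; simpa using h⟩

theorem diwalk_concat {k m : ℕ} {p q r : α}
    (h1 : DiWalk E k p q) (h2 : DiWalk E m q r) : DiWalk E (k + m) p r := by
  obtain ⟨f, hf0, hfk, hf⟩ := h1
  obtain ⟨g, hg0, hgm, hg⟩ := h2
  refine ⟨fun i => if i < k then f i else g (i - k), ?_, ?_, ?_⟩
  · by_cases h : 0 < k
    · simp [h, hf0]
    · have hk : k = 0 := by omega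
      subst hk
      simp only [Nat.lt_irrefl, if_false, Nat.sub_zero, hg0]
      rw [← hf0, hfk]
  · have : ¬ (k + m < k) := by omega
    simp [this, hgm]
  · intro i hi
    by_cases h : i + 1 < k
    · have h' : i < k := by omega
      simp only [h, h', if_true]
      exact hf i h'
    · by_cases h' : i < k
      · have hik : i + 1 = k := by omega
        have e : g (i + 1 - k) = f (i + 1) := by
          rw [hik, Nat.sub_self, hg0, ← hfk]
        simp only [if_pos h', if_neg h, e]
        exact hf i h'
      · simp only [if_neg h, if_neg h']
        have hm : i - k < m := by omega
        have e : i + 1 - k = i - k + 1 := by omega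
        rw [e]
        exact hg (i - k) hm

theorem diwalk_snoc {k : ℕ} {p q r : α} (h1 : DiWalk E k p q) (h2 : E q r) :
    DiWalk E (k + 1) p r := diwalk_concat h1 (diwalk_single h2)

end

variable {a ℓ : ℕ} {U V : Set (Fin ℓ → Bool)} {w : Fin ℓ → Bool}

theorem edge_yp {c : Fin ℓ} {i : ℕ} (h : i < a) {p q : DV a ℓ U V}
    (hp : ypos a c i p) (hq : ypos a c (i + 1) q) : DEdge a ℓ U V w p q :=
  Or.inr (Or.inr (Or.inr (Or.inr (Or.inr (Or.inr (Or.inr (Or.inl ⟨c, i, h, hp, hq⟩)))))))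

theorem walkU (u : U) : ∀ i, (h : i ≤ a) →
    DiWalk (DEdge a ℓ U V w) i (DV.uv u ⟨0, by omega⟩) (DV.uv u ⟨i, by omega⟩) := by
  intro i
  induction i with
  | zero => intro _; exact diwalk_refl _ _
  | succ i ih =>
    intro h
    exact diwalk_snoc (ih (by omega)) (Or.inl ⟨u, i, by omega, rfl, rfl⟩)

theorem walkV (v : V) : ∀ i, (h : i ≤ a) →
    DiWalk (DEdge a ℓ U V w) i (DV.vv v ⟨0, by omega⟩) (DV.vv v ⟨i, by omega⟩) := by
  intro i
  induction i with
  | zero => intro _; exact diwalk_refl _ _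
  | succ i ih =>
    intro h
    exact diwalk_snoc (ih (by omega)) (Or.inr (Or.inl ⟨v, i, by omega, rfl, rfl⟩))

theorem walk_from_y (ha : 0 < a) (c : Fin ℓ) :
    ∀ i, i ≤ a → ∀ z : DV a ℓ U V, ypos a c i z →
      DiWalk (DEdge a ℓ U V w) i DV.y z := by
  intro i
  induction i with
  | zero =>
    intro _ z hz
    rcases hz with ⟨_, rfl⟩ | ⟨h, _⟩ | ⟨_, h, _⟩
    · exact diwalk_refl _ _
    · omega
    · omega
  | succ i ih =>
    intro hia z hz
    obtain ⟨z', hz'⟩ : ∃ z' : DV a ℓ U V, ypos a c i z' := by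
      rcases Nat.eq_zero_or_pos i with rfl | hi
      · exact ⟨.y, Or.inl ⟨rfl, rfl⟩⟩
      · exact ⟨.yp c ⟨i - 1, by omega⟩, Or.inr (Or.inr ⟨by omega, hi, by omega, rfl⟩)⟩
    exact diwalk_snoc (ih (by omega) z' hz') (edge_yp (by omega) hz' hz)

end DirEccConstr
open DirEccConstr in
theorem directed_ecc_construction_yes_case
    (a ℓ : ℕ) (ha : 0 < a) (hℓ : 0 < ℓ)
    (U V : Set (Fin ℓ → Bool)) (hUfin : U.Finite) (hVfin : V.Finite)
    (hU : U.Nonempty) (hV : V.Nonempty) (w : Fin ℓ → Bool)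
    (hUone : ∀ u ∈ U, ∃ c, u c = true) (hVone : ∀ v ∈ V, ∃ c, v c = true)
    (hUcov : ∀ c : Fin ℓ, ∃ u ∈ U, u c = true)
    (hyes : ∀ u ∈ U, ∀ v ∈ V, ∃ c, u c = true ∧ v c = true ∧ w c = true) :
    ∀ (u : Fin ℓ → Bool) (hu : u ∈ U), ∀ z : DV a ℓ U V,
      ∃ k ≤ a + 3, DiWalk (DEdge a ℓ U V w) k (DV.uv ⟨u, hu⟩ (Fin.last a)) z := by
  intro u hu z
  set s : DV a ℓ U V := DV.uv ⟨u, hu⟩ (Fin.last a) with hs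
  have hzero : ∀ u' : U, (DV.uv u' (⟨0, by omega⟩ : Fin (a+1)) : DV a ℓ U V)
      = DV.uv u' 0 := by
    intro u'; congr 1
  have hzeroV : ∀ v' : V, (DV.vv v' (⟨0, by omega⟩ : Fin (a+1)) : DV a ℓ U V)
      = DV.vv v' 0 := by
    intro v'; congr 1
  have wx : DiWalk (DEdge a ℓ U V w) 1 s DV.x :=
    diwalk_single (Or.inr (Or.inr (Or.inr (Or.inr (Or.inl ⟨⟨u, hu⟩, rfl, rfl⟩)))))
  -- walk of length 2 + i from s to uv u' i
  have wuv : ∀ (u' : U) (i : ℕ) (h : i ≤ a),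
      DiWalk (DEdge a ℓ U V w) (2 + i) s (DV.uv u' ⟨i, by omega⟩) := by
    intro u' i h
    have e1 : DiWalk (DEdge a ℓ U V w) 1 DV.x (DV.uv u' ⟨0, by omega⟩) := by
      rw [hzero]
      exact diwalk_single (Or.inr (Or.inr (Or.inr (Or.inr (Or.inr (Or.inl ⟨u', rfl, rfl⟩))))))
    exact diwalk_concat (diwalk_concat wx e1) (walkU u' i h)
  -- walk of length 2 from s to y
  obtain ⟨c0, hc0⟩ := hUone u hu
  have wcU0 : DiWalk (DEdge a ℓ U V w) 1 s (DV.cU c0) :=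
    diwalk_single (Or.inr (Or.inr (Or.inl ⟨⟨u, hu⟩, c0, hc0, rfl, rfl⟩)))
  have wy : DiWalk (DEdge a ℓ U V w) 2 s DV.y :=
    diwalk_snoc wcU0 (Or.inr (Or.inr (Or.inr (Or.inr (Or.inr (Or.inr
      (Or.inl ⟨c0, rfl, rfl⟩)))))))
  cases z with
  | cU c =>
    obtain ⟨u', hu', hc⟩ := hUcov c
    refine ⟨a + 3, le_refl _, ?_⟩
    have w1 := wuv ⟨u', hu'⟩ a (le_refl a)
    have hlast : (DV.uv (⟨u', hu'⟩ : U) (⟨a, by omega⟩ : Fin (a+1)) : DV a ℓ U V)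
        = DV.uv ⟨u', hu'⟩ (Fin.last a) := rfl
    rw [hlast] at w1
    have := diwalk_snoc w1 (Or.inr (Or.inr (Or.inl ⟨⟨u', hu'⟩, c, hc, rfl, rfl⟩)))
    have e : 2 + a + 1 = a + 3 := by omega
    rwa [e] at this
  | cV c =>
    refine ⟨2 + a, by omega, ?_⟩
    exact diwalk_concat wy (walk_from_y ha c a (le_refl a) _ (Or.inr (Or.inl ⟨rfl, rfl⟩)))
  | uv u' i =>
    refine ⟨2 + i.val, by omega, ?_⟩
    have := wuv u' i.val (by omega)
    exact this
  | vv v i =>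
    obtain ⟨c, hcu, hcv, hcw⟩ := hyes u hu v.1 v.2
    refine ⟨3 + i.val, by omega, ?_⟩
    have w1 : DiWalk (DEdge a ℓ U V w) 1 s (DV.cU c) :=
      diwalk_single (Or.inr (Or.inr (Or.inl ⟨⟨u, hu⟩, c, hcu, rfl, rfl⟩)))
    have w2 := diwalk_snoc w1 (Or.inr (Or.inr (Or.inr (Or.inr (Or.inr (Or.inr (Or.inr
      (Or.inr ⟨c, hcw, rfl, rfl⟩))))))))
    have w3 := diwalk_snoc w2 (Or.inr (Or.inr (Or.inr (Or.inl ⟨v, c, hcv, rfl, rfl⟩))))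
    have w4 : DiWalk (DEdge a ℓ U V w) 3 s (DV.vv v ⟨0, by omega⟩) := by
      rw [hzeroV]; exact w3
    have := diwalk_concat w4 (walkV v i.val (by omega))
    exact this
  | x => exact ⟨1, by omega, wx⟩
  | y => exact ⟨2, by omega, wy⟩
  | yp c j =>
    refine ⟨2 + (j.val + 1), by have := j.isLt; omega, ?_⟩
    refine diwalk_concat wy (walk_from_y ha c (j.val + 1) (by have := j.isLt; omega) _ ?_)
    exact Or.inr (Or.inr ⟨by have := j.isLt; omega, by omega, by have := j.isLt; omega, rfl⟩)
end

section
/- Suppose there exist u ∈ U and v ∈ V such that no coordinate c satisfies u[c] = v[c] = w[c] = 1. Then in the directed eccentricity-construction graph D(U,V,w,a), every directed walk from u^a to v^a has length at least 2a+3. -/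
open DirEccConstr in
open Classical in
/-- Potential function: increases by at most 1 along every edge, is `0` at `u^a`
and `2a+3` at `v^a`. -/
noncomputable def eccPhi (a ℓ : ℕ) (U V : Set (Fin ℓ → Bool)) (u v : Fin ℓ → Bool) :
    DV a ℓ U V → ℤ
  | .cU c => if u c = true then 1 else (a : ℤ) + 2
  | .cV c => if v c = true then (a : ℤ) + 2 else 2
  | .uv u' i => if u'.1 = u ∧ i = Fin.last a then 0 else ((i : ℕ) : ℤ) + 2
  | .vv v' i => if v'.1 = v then (a : ℤ) + 3 + ((i : ℕ) : ℤ) else ((i : ℕ) : ℤ) + 3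
  | .x => 1
  | .y => 2
  | .yp _ j => ((j : ℕ) : ℤ) + 3

open DirEccConstr in
lemma eccPhi_edge {a ℓ : ℕ} {U V : Set (Fin ℓ → Bool)} {w u v : Fin ℓ → Bool}
    (ha : 0 < a)
    (hno : ∀ c : Fin ℓ, ¬(u c = true ∧ v c = true ∧ w c = true))
    {p q : DV a ℓ U V} (h : DEdge a ℓ U V w p q) :
    eccPhi a ℓ U V u v q ≤ eccPhi a ℓ U V u v p + 1 := by
  rcases h with ⟨u', i, hi, hp, hq⟩ | ⟨v', i, hi, hp, hq⟩ | ⟨u', c, hc, hp, hq⟩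
    | ⟨v', c, hc, hp, hq⟩ | ⟨u', hp, hq⟩ | ⟨u', hp, hq⟩ | ⟨c, hp, hq⟩
    | ⟨c, i, hi, hp, hq⟩ | ⟨c, hc, hp, hq⟩
  · subst hp; subst hq
    simp only [eccPhi, Fin.ext_iff, Fin.val_last]
    split_ifs <;> push_cast <;> omega
  · subst hp; subst hq
    simp only [eccPhi]
    split_ifs <;> push_cast <;> omega
  · subst hp; subst hq
    by_cases h2 : u'.1 = u
    · have hcu : u c = true := h2 ▸ hc
      simp only [eccPhi, hcu, if_true, h2]
      simp
    · simp only [eccPhi]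
      have hcond : ¬(u'.1 = u ∧ True) := by simp [h2]
      rw [if_neg hcond]
      split_ifs <;> push_cast <;> omega
  · subst hp; subst hq
    by_cases h2 : v'.1 = v
    · have hcv : v c = true := h2 ▸ hc
      simp only [eccPhi, hcv, if_true, h2, Fin.val_zero]
      push_cast; omega
    · simp only [eccPhi, Fin.val_zero]
      rw [if_neg h2]
      split_ifs <;> push_cast <;> omega
  · subst hp; subst hq
    simp only [eccPhi]
    split_ifs <;> push_cast <;> omega
  · subst hp; subst hq
    simp only [eccPhi, Fin.ext_iff, Fin.val_last, Fin.val_zero]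
    split_ifs <;> push_cast <;> omega
  · subst hp; subst hq
    simp only [eccPhi]
    split_ifs <;> push_cast <;> omega
  · -- step along the y → c_V path
    have hpval : eccPhi a ℓ U V u v p = 2 + (i : ℤ) := by
      rcases hp with ⟨hi0, rfl⟩ | ⟨hia, rfl⟩ | ⟨hlt, hpos, hia, rfl⟩
      · simp [eccPhi, hi0]
      · omega
      · simp only [eccPhi]; push_cast; omega
    have hqval : eccPhi a ℓ U V u v q ≤ 3 + (i : ℤ) := by
      rcases hq with ⟨hi0, rfl⟩ | ⟨hia, rfl⟩ | ⟨hlt, hpos, hia, rfl⟩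
      · omega
      · simp only [eccPhi]
        split_ifs <;> push_cast <;> omega
      · simp only [eccPhi]; push_cast; omega
    omega
  · subst hp; subst hq
    by_cases h1 : u c = true
    · have hvc : v c ≠ true := fun hvc => hno c ⟨h1, hvc, hc⟩
      simp only [eccPhi, h1, if_true]
      rw [if_neg hvc]
      omega
    · simp only [eccPhi]
      rw [if_neg h1]
      split_ifs <;> push_cast <;> omega

open DirEccConstr in
theorem directed_ecc_construction_no_case
    (a ℓ : ℕ) (ha : 0 < a) (hℓ : 0 < ℓ)
    (U V : Set (Fin ℓ → Bool)) (hUfin : U.Finite) (hVfin : V.Finite)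
    (hU : U.Nonempty) (hV : V.Nonempty) (w : Fin ℓ → Bool)
    (hUone : ∀ u ∈ U, ∃ c, u c = true) (hVone : ∀ v ∈ V, ∃ c, v c = true)
    (hUcov : ∀ c : Fin ℓ, ∃ u ∈ U, u c = true)
    (u v : Fin ℓ → Bool) (hu : u ∈ U) (hv : v ∈ V)
    (hno : ∀ c : Fin ℓ, ¬(u c = true ∧ v c = true ∧ w c = true)) :
    ∀ k : ℕ, DiWalk (DEdge a ℓ U V w) k (DV.uv ⟨u, hu⟩ (Fin.last a))
        (DV.vv ⟨v, hv⟩ (Fin.last a)) → 2 * a + 3 ≤ k := by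
  intro k hwalk
  obtain ⟨f, h0, hk, hE⟩ := hwalk
  have key : ∀ j, j ≤ k →
      eccPhi a ℓ U V u v (f j) ≤ eccPhi a ℓ U V u v (f 0) + (j : ℤ) := by
    intro j
    induction j with
    | zero => intro _; simp
    | succ n ih =>
      intro hn
      have h1 := eccPhi_edge ha hno (hE n (by omega))
      have h2 := ih (by omega)
      push_cast
      omega
  have hfin := key k le_rfl
  rw [h0, hk] at hfin
  have hstart : eccPhi a ℓ U V u v (DV.uv ⟨u, hu⟩ (Fin.last a)) = 0 := by
    simp [eccPhi]
  have hend : eccPhi a ℓ U V u v (DV.vv ⟨v, hv⟩ (Fin.last a)) = 2 * (a : ℤ) + 3 := by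
    simp [eccPhi, Fin.val_last]; ring
  rw [hstart, hend] at hfin
  omega
end

section
/- Let G be a finite connected undirected unweighted graph with shortest-path distance d (viewed as a real number). Let D' be a positive integer, let δ be a real number with 0 < δ < 1/2, and let s*, t*, w, q, q' be vertices of G such that: d(s*,t*) ≥ D'; d(w,t*) < 2D'/(3(1−δ)); d(w,q) = ⌊D'/3⌋ and d(w,q) + d(q,t*) = d(w,t*) (i.e., q lies on a shortest path from w to t* at distance ⌊D'/3⌋ from w); and d(q',q) ≤ δD'/(1−2δ). Then d(s*,q') ≥ D'·(4/3 − δ/(1−2δ) − 2/(3(1−δ))) − 2/3. -/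
/-!
Case-2 distance bound in the correctness proof of the partially dynamic nearly
3/2-approximation algorithm for diameter (Lemma 4.2).  `G` is a finite connected
undirected unweighted graph, `d` its shortest-path distance.  If `d(s*,t*) ≥ D'`,
`d(w,t*) < 2D'/(3(1−δ))`, `q` lies on a shortest path from `w` to `t*` at distance
`⌊D'/3⌋` from `w`, and `d(q',q) ≤ δD'/(1−2δ)`, then
`d(s*,q') ≥ D'·(4/3 − δ/(1−2δ) − 2/(3(1−δ))) − 2/3`.
-/

theorem diameter_case2_bound {V : Type*} [Fintype V] (G : SimpleGraph V)
    (hconn : G.Connected) (D' : ℕ) (hD' : 0 < D') (δ : ℝ) (hδ0 : 0 < δ) (hδ1 : δ < 1 / 2)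
    (sstar tstar w q q' : V)
    (hdiam : (D' : ℝ) ≤ (G.dist sstar tstar : ℝ))
    (hwt : (G.dist w tstar : ℝ) < 2 * (D' : ℝ) / (3 * (1 - δ)))
    (hq_pos : G.dist w q = D' / 3)
    (hq_on : G.dist w q + G.dist q tstar = G.dist w tstar)
    (hq' : (G.dist q' q : ℝ) ≤ δ * (D' : ℝ) / (1 - 2 * δ)) :
    (D' : ℝ) * (4 / 3 - δ / (1 - 2 * δ) - 2 / (3 * (1 - δ))) - 2 / 3
      ≤ (G.dist sstar q' : ℝ) := by
  have htri : G.dist sstar tstar ≤ G.dist sstar q' + (G.dist q' q + G.dist q tstar) :=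
    le_trans hconn.dist_triangle (Nat.add_le_add_left hconn.dist_triangle _)
  have htriR : (G.dist sstar tstar : ℝ) ≤ G.dist sstar q' + (G.dist q' q + G.dist q tstar) := by
    exact_mod_cast htri
  have hqt : ((D' / 3 : ℕ) : ℝ) + G.dist q tstar = G.dist w tstar := by
    exact_mod_cast congrArg (Nat.cast : ℕ → ℝ) (hq_pos ▸ hq_on)
  have hf : D' ≤ 3 * (D' / 3) + 2 := by omega
  have hfloor : (D' : ℝ) ≤ 3 * ((D' / 3 : ℕ) : ℝ) + 2 := by exact_mod_cast hf
  have h1 : (G.dist q' q : ℝ) ≤ (D' : ℝ) * (δ / (1 - 2 * δ)) := by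
    calc (G.dist q' q : ℝ) ≤ δ * (D' : ℝ) / (1 - 2 * δ) := hq'
      _ = (D' : ℝ) * (δ / (1 - 2 * δ)) := by ring
  have h2 : (G.dist w tstar : ℝ) < (D' : ℝ) * (2 / (3 * (1 - δ))) := by
    calc (G.dist w tstar : ℝ) < 2 * (D' : ℝ) / (3 * (1 - δ)) := hwt
      _ = (D' : ℝ) * (2 / (3 * (1 - δ))) := by ring
  have hexp : (D' : ℝ) * (4 / 3 - δ / (1 - 2 * δ) - 2 / (3 * (1 - δ)))
      = (D' : ℝ) * (4/3) - (D' : ℝ) * (δ / (1 - 2 * δ)) - (D' : ℝ) * (2 / (3 * (1 - δ))) := by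
    ring
  rw [hexp]
  linarith
end

section
/- Let G be a finite connected undirected unweighted graph with shortest-path distance d (viewed as a real number), and for a vertex z let ecc(z) = max_y d(z,y). Let R' be a positive integer, let δ be a real number with 0 < δ < 1/2, and let c*, w, q, q' be vertices of G such that: ecc(c*) ≤ R'; d(w,q) = ⌊R'/2⌋ and d(w,q) + d(q,c*) = d(w,c*) (i.e., q lies on a shortest path from w to c* at distance ⌊R'/2⌋ from w); and d(q',q) ≤ δR'/(1−2δ). Then ecc(q') ≤ R'·(δ/(1−2δ) + 3/2) + 1/2. -/
/-!
Case-2 eccentricity bound in the correctness proof of the partially dynamic nearly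
3/2-approximation algorithm for radius (Lemma 4.4).  `G` is a finite connected
undirected unweighted graph, `d` its shortest-path distance and
`ecc(z) = max_y d(z,y)`.  If `ecc(c*) ≤ R'`, `q` lies on a shortest path from `w`
to `c*` at distance `⌊R'/2⌋` from `w`, and `d(q',q) ≤ δR'/(1−2δ)`, then
`ecc(q') ≤ R'·(δ/(1−2δ) + 3/2) + 1/2`.
-/

/-- The eccentricity `max_y d(z,y)` of a vertex `z` in a finite graph. -/
noncomputable def eccen {V : Type*} [Fintype V] (G : SimpleGraph V) (z : V) : ℕ :=
  Finset.univ.sup fun y => G.dist z y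

theorem radius_case2_bound {V : Type*} [Fintype V] (G : SimpleGraph V)
    (hconn : G.Connected) (R' : ℕ) (hR' : 0 < R') (δ : ℝ) (hδ0 : 0 < δ) (hδ1 : δ < 1 / 2)
    (cstar w q q' : V)
    (hecc : eccen G cstar ≤ R')
    (hq_pos : G.dist w q = R' / 2)
    (hq_on : G.dist w q + G.dist q cstar = G.dist w cstar)
    (hq' : (G.dist q' q : ℝ) ≤ δ * (R' : ℝ) / (1 - 2 * δ)) :
    (eccen G q' : ℝ) ≤ (R' : ℝ) * (δ / (1 - 2 * δ) + 3 / 2) + 1 / 2 := by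
  have hne : Nonempty V := hconn.nonempty
  -- pointwise bound
  have key : ∀ y : V, (G.dist q' y : ℝ) ≤ (R' : ℝ) * (δ / (1 - 2 * δ) + 3 / 2) + 1 / 2 := by
    intro y
    have t1 : G.dist q' y ≤ G.dist q' q + G.dist q y := hconn.dist_triangle
    have t2 : G.dist q y ≤ G.dist q cstar + G.dist cstar y := hconn.dist_triangle
    have hwc : G.dist w cstar ≤ R' := by
      have h := Finset.le_sup (f := fun z => G.dist cstar z) (Finset.mem_univ w)
      rw [show G.dist w cstar = G.dist cstar w from SimpleGraph.dist_comm]; exact le_trans h hecc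
    have hcy : G.dist cstar y ≤ R' :=
      le_trans (Finset.le_sup (f := fun z => G.dist cstar z) (Finset.mem_univ y)) hecc
    have hqc : G.dist q cstar = G.dist w cstar - R' / 2 := by omega
    have hdiv : R' ≤ 2 * (R' / 2) + 1 := by omega
    have hqcR : (G.dist q cstar : ℝ) ≤ ((R' : ℝ) + 1) / 2 := by
      have h1 : (G.dist q cstar : ℕ) ≤ R' - R' / 2 := by omega
      have h2 : (2 : ℝ) * (G.dist q cstar : ℝ) ≤ (R' : ℝ) + 1 := by
        have : 2 * G.dist q cstar ≤ R' + 1 := by omega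
        exact_mod_cast this
      linarith
    have hall : (G.dist q' y : ℝ) ≤ (G.dist q' q : ℝ) + (G.dist q cstar : ℝ) + (G.dist cstar y : ℝ) := by
      have : (G.dist q' y : ℕ) ≤ G.dist q' q + G.dist q cstar + G.dist cstar y := by omega
      exact_mod_cast this
    have hcyR : (G.dist cstar y : ℝ) ≤ (R' : ℝ) := by exact_mod_cast hcy
    have : (G.dist q' y : ℝ) ≤ δ * R' / (1 - 2 * δ) + ((R' : ℝ) + 1) / 2 + R' := by linarith
    have heq : δ * (R' : ℝ) / (1 - 2 * δ) = (R' : ℝ) * (δ / (1 - 2 * δ)) := by ring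
    linarith [heq ▸ this]
  -- sup is attained
  obtain ⟨y, -, hy⟩ := Finset.exists_mem_eq_sup Finset.univ Finset.univ_nonempty
    (fun y => G.dist q' y)
  have : (eccen G q' : ℝ) = (G.dist q' y : ℝ) := by
    unfold eccen; rw [hy]
  rw [this]; exact key y
end

section
/- Let G be a finite connected undirected unweighted graph with shortest-path distance d (viewed as a real number), and for a vertex z let ecc(z) = max_y d(z,y). Let D' be a positive integer, let δ be a real number with 0 < δ < 1/2, let v be a vertex with ecc(v) = E and E ≥ D', and let w, q, x be vertices such that: d(w,v) < 3E/(5(1−δ)); d(w,q) = ⌊2D'/5⌋ and d(w,q) + d(q,v) = d(w,v) (i.e., q lies on a shortest path from w to v at distance ⌊2D'/5⌋ from w); and d(q,x) ≤ δD'/(1−2δ). Then d(x,v) ≤ δD'/(1−2δ) + 3E/(5(1−δ)) − 2D'/5 + 4/5, and moreover for every vertex v' with d(v,v') = E one has d(x,v') ≥ E − d(x,v), so ecc(x) ≥ E − d(x,v). -/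
theorem eccentricities_case2_bound {V : Type*} [Fintype V] (G : SimpleGraph V)
    (hconn : G.Connected) (D' : ℕ) (hD' : 0 < D') (δ : ℝ) (hδ0 : 0 < δ) (hδ1 : δ < 1 / 2)
    (v : V) (E : ℕ) (hE : eccen G v = E) (hED : D' ≤ E)
    (w q x : V)
    (hwv : (G.dist w v : ℝ) < 3 * (E : ℝ) / (5 * (1 - δ)))
    (hq_pos : G.dist w q = 2 * D' / 5)
    (hq_on : G.dist w q + G.dist q v = G.dist w v)
    (hqx : (G.dist q x : ℝ) ≤ δ * (D' : ℝ) / (1 - 2 * δ)) :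
    (G.dist x v : ℝ) ≤ δ * (D' : ℝ) / (1 - 2 * δ) + 3 * (E : ℝ) / (5 * (1 - δ))
        - 2 * (D' : ℝ) / 5 + 4 / 5 ∧
      (∀ v' : V, G.dist v v' = E → (E : ℝ) - (G.dist x v : ℝ) ≤ (G.dist x v' : ℝ)) ∧
      (E : ℝ) - (G.dist x v : ℝ) ≤ (eccen G x : ℝ) := by
  have hsym : ∀ a b : V, G.dist a b = G.dist b a := fun a b => SimpleGraph.dist_comm
  -- floor bound: 2*D' ≤ 5*(2*D'/5) + 4
  have hfloor : (2 * (D' : ℝ)) / 5 - 4 / 5 ≤ ((2 * D' / 5 : ℕ) : ℝ) := by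
    have h := Nat.div_add_mod (2 * D') 5
    have hm : (2 * D') % 5 ≤ 4 := Nat.le_of_lt_succ (Nat.mod_lt _ (by norm_num))
    have : 2 * D' ≤ 5 * (2 * D' / 5) + 4 := by omega
    have := (Nat.cast_le (α := ℝ)).2 this
    push_cast at this
    linarith
  -- triangle: d x v ≤ d q x + d q v
  have htri : G.dist x v ≤ G.dist q x + G.dist q v := by
    calc G.dist x v ≤ G.dist x q + G.dist q v := hconn.dist_triangle
      _ = G.dist q x + G.dist q v := by rw [hsym x q]
  have hqv : G.dist q v = G.dist w v - G.dist w q := by omega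
  have hwq_le : G.dist w q ≤ G.dist w v := by omega
  have hxv : (G.dist x v : ℝ) ≤ (G.dist q x : ℝ) + (G.dist w v : ℝ) - ((2 * D' / 5 : ℕ) : ℝ) := by
    have h := (Nat.cast_le (α := ℝ)).2 htri
    rw [hqv, Nat.cast_add, Nat.cast_sub hwq_le, hq_pos] at h
    linarith
  have h1 : (G.dist x v : ℝ) ≤ δ * (D' : ℝ) / (1 - 2 * δ) + 3 * (E : ℝ) / (5 * (1 - δ))
      - 2 * (D' : ℝ) / 5 + 4 / 5 := by
    have := hfloor
    linarith
  refine ⟨h1, ?_, ?_⟩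
  · intro v' hv'
    have htri2 : G.dist v v' ≤ G.dist v x + G.dist x v' := hconn.dist_triangle
    rw [hv', hsym v x] at htri2
    have := (Nat.cast_le (α := ℝ)).2 htri2
    push_cast at this
    linarith
  · have : Nonempty V := ⟨v⟩
    obtain ⟨v', _, hv'⟩ := Finset.exists_mem_eq_sup Finset.univ
      Finset.univ_nonempty (fun y => G.dist v y)
    have hv'E : G.dist v v' = E := by rw [← hE, eccen, hv']
    have htri2 : G.dist v v' ≤ G.dist v x + G.dist x v' := hconn.dist_triangle
    rw [hv'E, hsym v x] at htri2
    have hle : G.dist x v' ≤ eccen G x := Finset.le_sup (Finset.mem_univ v')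
    have h2 := (Nat.cast_le (α := ℝ)).2 htri2
    have h3 := (Nat.cast_le (α := ℝ)).2 hle
    push_cast at h2 h3
    linarith
end
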